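/- Minkowski summation of UL-flexibility sets is exactly additive in parameters: for valid UL-parameter pairs (u₁,l₁) and (u₂,l₂), F(u₁,l₁) ⊕ F(u₂,l₂) = F(u₁+u₂, l₁+l₂), where ⊕ denotes the Minkowski sum {p₁ + p₂ : p₁ ∈ F(u₁,l₁), p₂ ∈ F(u₂,l₂)}. -/

import Mathlib

/-!
For a valid pair `(u, l)`, `ULset T Δt u l` is the convex hull of the permuted vertices
`ULvertex T Δt u l K ∘ σ`. By separation it suffices that every linear functional `c` is
maximised over the set at such a vertex. After sorting `c` decreasingly, take `K = #{c > 0}`: on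
the positive part of `c` the prefix sums of the vertex attain the upper bounds `u`, on the rest
its suffix sums attain the lower bounds `l`, and the superlevel sets of `c` are exactly such
prefixes and suffixes, so summation by parts over them gives the bound. Validity is what makes the
vertices antitone and hence feasible. Since vertices are additive in `(u, l)`, the hull for the
summed parameters lies in the sum of the two hulls, hence in the Minkowski sum.
-/

open Finset

noncomputable section

/-- The UL-flexibility set: all signals `p` such that for every nonempty
subset `S` of time indices with `|S| = k`, `l k ≤ Δt * ∑_{t∈S} p t ≤ u k`. -/
def ULset (T : ℕ) (Δt : ℝ) (u l : ℕ → ℝ) : Set (Fin T → ℝ) :=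
  {p | ∀ S : Finset (Fin T), S.Nonempty →
    l S.card ≤ Δt * ∑ t ∈ S, p t ∧ Δt * ∑ t ∈ S, p t ≤ u S.card}

/-- Zero extension of a parameter vector: value 0 at index 0. -/
def ZExt (v : ℕ → ℝ) : ℕ → ℝ := fun k => if k = 0 then 0 else v k

/-- Valid UL parameters: the zero-extension of `u` is concave, nonnegative and
increasing; the zero-extension of `l` is convex, nonnegative and increasing; and
the zero-extension of `u` plus the reversed zero-extension of `l` is increasing. -/
def ValidUL (T : ℕ) (u l : ℕ → ℝ) : Prop :=
  (∀ j, 1 ≤ j → j + 1 ≤ T → ZExt u (j - 1) + ZExt u (j + 1) ≤ 2 * ZExt u j) ∧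
  (∀ k, k ≤ T → 0 ≤ ZExt u k) ∧
  (∀ j, j + 1 ≤ T → ZExt u j ≤ ZExt u (j + 1)) ∧
  (∀ j, 1 ≤ j → j + 1 ≤ T → 2 * ZExt l j ≤ ZExt l (j - 1) + ZExt l (j + 1)) ∧
  (∀ k, k ≤ T → 0 ≤ ZExt l k) ∧
  (∀ j, j + 1 ≤ T → ZExt l j ≤ ZExt l (j + 1)) ∧
  (∀ j, 1 ≤ j → j ≤ T →
    ZExt l (T - j + 1) - ZExt l (T - j) ≤ ZExt u j - ZExt u (j - 1))

/-- Vertex candidate `p^(k)` (0-based time index `t` corresponds to paper index `t+1`). -/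
def ULvertex (T : ℕ) (Δt : ℝ) (u l : ℕ → ℝ) (k : ℕ) : Fin T → ℝ :=
  fun t => if (t : ℕ) < k then (ZExt u ((t : ℕ) + 1) - ZExt u (t : ℕ)) / Δt
           else (ZExt l (T - (t : ℕ)) - ZExt l (T - (t : ℕ) - 1)) / Δt

open scoped Pointwise

section SumBounds

variable {α : Type*} [LinearOrder α] {f : α → ℝ}

theorem sum_le_sum_of_card_eq_of_sdiff_le (hf : Antitone f) {S I : Finset α} (hcard : #S = #I)
    (h : ∀ a ∈ S \ I, ∀ b ∈ I \ S, b ≤ a) : ∑ a ∈ S, f a ≤ ∑ a ∈ I, f a := by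
  rw [← sum_inter_add_sum_sdiff S I, ← sum_inter_add_sum_sdiff I S, inter_comm, add_le_add_iff_left]
  rcases (I \ S).eq_empty_or_nonempty with hIS | hIS
  · rw [hIS, card_eq_zero.1 ((card_sdiff_comm hcard).trans (by rw [hIS, card_empty]))]
  · set m := (I \ S).max' hIS
    calc ∑ a ∈ S \ I, f a ≤ #(S \ I) • f m :=
          sum_le_card_nsmul _ _ _ fun a ha => hf (h a ha m (max'_mem _ _))
      _ = #(I \ S) • f m := by rw [card_sdiff_comm hcard]
      _ ≤ ∑ a ∈ I \ S, f a := card_nsmul_le_sum _ _ _ fun b hb => hf (le_max' _ b hb)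

theorem sum_le_sum_of_isLowerSet (hf : Antitone f) {S I : Finset α} (hI : IsLowerSet (I : Set α))
    (hcard : #S = #I) : ∑ a ∈ S, f a ≤ ∑ a ∈ I, f a :=
  sum_le_sum_of_card_eq_of_sdiff_le hf hcard fun a ha b hb => by
    by_contra! hab
    exact (mem_sdiff.1 ha).2 (hI hab.le (mem_sdiff.1 hb).1)

theorem sum_le_sum_of_isUpperSet (hf : Antitone f) {S J : Finset α} (hJ : IsUpperSet (J : Set α))
    (hcard : #J = #S) : ∑ a ∈ J, f a ≤ ∑ a ∈ S, f a :=
  sum_le_sum_of_card_eq_of_sdiff_le hf hcard fun a ha b hb => by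
    by_contra! hab
    exact (mem_sdiff.1 hb).2 (hJ hab.le (mem_sdiff.1 ha).1)

end SumBounds

theorem sum_mul_nonneg_of_sum_superlevel_nonneg {ι : Type*} (s : Finset ι) {a d : ι → ℝ}
    (ha : ∀ i ∈ s, 0 ≤ a i) (hd : ∀ i ∈ s, 0 ≤ ∑ j ∈ s with a i ≤ a j, d j) :
    0 ≤ ∑ i ∈ s, a i * d i := by
  induction s using Finset.strongInduction generalizing a with
  | H s ih =>
  rcases s.eq_empty_or_nonempty with rfl | hs
  · simp
  obtain ⟨m, hm, hmin⟩ := s.exists_min_image a hs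
  -- layer-cake step: split off the constant layer of height `a m`
  set s' := s.filter (a m < a ·)
  have hsplit : ∑ i ∈ s, a i * d i = a m * ∑ i ∈ s, d i + ∑ i ∈ s', (a i - a m) * d i := by
    rw [sum_filter_of_ne fun i hi hne => lt_of_le_of_ne (hmin i hi) fun h => hne (by simp [← h]),
      mul_sum, ← sum_add_distrib]
    exact sum_congr rfl fun i _ => by ring
  have hs' : s' ⊂ s := filter_ssubset.2 ⟨m, hm, lt_irrefl _⟩
  have htotal : 0 ≤ ∑ i ∈ s, d i := by
    simpa [filter_true_of_mem hmin] using hd m hm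
  have hrest : 0 ≤ ∑ i ∈ s', (a i - a m) * d i := by
    refine ih s' hs' (fun i hi => sub_nonneg.2 (hmin i (mem_filter.1 hi).1)) fun i hi => ?_
    rw [mem_filter] at hi
    convert hd i hi.1 using 1
    rw [filter_filter]
    exact sum_congr (filter_congr fun j _ =>
      ⟨fun h => by linarith [h.2], fun h => ⟨by linarith [hi.2], by linarith⟩⟩) fun _ _ => rfl
  rw [hsplit]
  exact add_nonneg (mul_nonneg (ha m hm) htotal) hrest

section PrefixSets

variable {T : ℕ}

def prefixSet (T j : ℕ) : Finset (Fin T) := univ.filter fun t => (t : ℕ) < j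

def suffixSet (T m : ℕ) : Finset (Fin T) := (prefixSet T (T - m))ᶜ

theorem isLowerSet_prefixSet (j : ℕ) : IsLowerSet (prefixSet T j : Set (Fin T)) :=
  fun _ _ hts hs => by
    simp only [prefixSet, coe_filter, mem_univ, true_and, Set.mem_ofPred_eq] at hs ⊢
    exact (Fin.le_def.1 hts).trans_lt hs

theorem isUpperSet_suffixSet (m : ℕ) : IsUpperSet (suffixSet T m : Set (Fin T)) := by
  rw [suffixSet, Finset.coe_compl]
  exact (isLowerSet_prefixSet _).compl

theorem sum_prefixSet (f : ℕ → ℝ) {j : ℕ} (hj : j ≤ T) :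
    ∑ t ∈ prefixSet T j, f t = ∑ i ∈ range j, f i := by
  have himage : (prefixSet T j).image Fin.val = range j := by
    ext i
    simp only [prefixSet, mem_image, mem_filter, mem_univ, true_and, mem_range]
    exact ⟨fun ⟨t, ht, hti⟩ => hti ▸ ht, fun hi => ⟨⟨i, by omega⟩, hi, rfl⟩⟩
  rw [← himage, sum_image Fin.val_injective.injOn]

theorem card_prefixSet {j : ℕ} (hj : j ≤ T) : #(prefixSet T j) = j := by
  simpa using sum_prefixSet (fun _ => (1 : ℝ)) hj

theorem card_suffixSet {m : ℕ} (hm : m ≤ T) : #(suffixSet T m) = m := by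
  rw [suffixSet, card_compl, Fintype.card_fin, card_prefixSet (Nat.sub_le T m)]
  omega

theorem prefixSet_self : prefixSet T T = univ := by
  ext t
  simp [prefixSet]

theorem IsLowerSet.eq_prefixSet {I : Finset (Fin T)} (hI : IsLowerSet (I : Set (Fin T))) :
    I = prefixSet T #I := by
  refine eq_of_subset_of_card_le (fun t ht => ?_) (card_prefixSet (card_finset_fin_le I)).le
  · have hIic : Iic t ⊆ I := fun s hs => hI (mem_Iic.1 hs) ht
    have := card_le_card hIic
    simp only [Fin.card_Iic] at this
    simp only [prefixSet, mem_filter, mem_univ, true_and]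
    omega

theorem IsUpperSet.eq_suffixSet {J : Finset (Fin T)} (hJ : IsUpperSet (J : Set (Fin T))) :
    J = suffixSet T #J := by
  have hJc : IsLowerSet ((Jᶜ : Finset (Fin T)) : Set (Fin T)) := by
    rw [Finset.coe_compl]; exact hJ.compl
  have hcard : #Jᶜ = T - #J := by rw [card_compl, Fintype.card_fin]
  rw [suffixSet, ← hcard, ← hJc.eq_prefixSet, compl_compl]

end PrefixSets

section ULsetBasics

variable {T : ℕ} {Δt : ℝ} {u l : ℕ → ℝ}

theorem comp_perm_mem_ULset {q : Fin T → ℝ} (hq : q ∈ ULset T Δt u l) (σ : Equiv.Perm (Fin T)) :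
    q ∘ σ ∈ ULset T Δt u l := fun S hS => by
  simpa [sum_map] using hq (S.map σ.toEmbedding) (hS.map)

theorem convex_ULset : Convex ℝ (ULset T Δt u l) := by
  intro x hx y hy a b ha hb hab S hS
  obtain ⟨hxl, hxu⟩ := hx S hS
  obtain ⟨hyl, hyu⟩ := hy S hS
  have hsum : Δt * ∑ t ∈ S, (a • x + b • y) t
      = a * (Δt * ∑ t ∈ S, x t) + b * (Δt * ∑ t ∈ S, y t) := by
    simp only [Pi.add_apply, Pi.smul_apply, smul_eq_mul, sum_add_distrib, ← mul_sum]
    ring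
  have hconv : ∀ r : ℝ, a * r + b * r = r := fun r => by rw [← add_mul, hab, one_mul]
  rw [hsum]
  constructor
  · linarith [hconv (l #S), mul_le_mul_of_nonneg_left hxl ha, mul_le_mul_of_nonneg_left hyl hb]
  · linarith [hconv (u #S), mul_le_mul_of_nonneg_left hxu ha, mul_le_mul_of_nonneg_left hyu hb]

theorem ULset_add_subset (u₁ l₁ u₂ l₂ : ℕ → ℝ) :
    ULset T Δt u₁ l₁ + ULset T Δt u₂ l₂ ⊆ ULset T Δt (u₁ + u₂) (l₁ + l₂) := by
  rintro _ ⟨p₁, hp₁, p₂, hp₂, rfl⟩ S hS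
  simp only [Pi.add_apply, sum_add_distrib, mul_add]
  exact ⟨add_le_add (hp₁ S hS).1 (hp₂ S hS).1, add_le_add (hp₁ S hS).2 (hp₂ S hS).2⟩

end ULsetBasics

/-- The partial sums of `Δt • ULvertex T Δt u l K`: they follow `u` up to `K`, then `l` read
backwards from `T`. -/
def ULprofile (T : ℕ) (u l : ℕ → ℝ) (K j : ℕ) : ℝ :=
  ZExt u (min j K) + ZExt l (T - K) - ZExt l (T - max j K)

section Profile

variable {T : ℕ} {Δt : ℝ} {u l : ℕ → ℝ} {K : ℕ}

theorem ZExt_zero (v : ℕ → ℝ) : ZExt v 0 = 0 := rfl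

theorem ZExt_of_ne_zero (v : ℕ → ℝ) {k : ℕ} (hk : k ≠ 0) : ZExt v k = v k := if_neg hk

theorem ZExt_add (v w : ℕ → ℝ) (k : ℕ) : ZExt (v + w) k = ZExt v k + ZExt w k := by
  unfold ZExt
  split_ifs <;> simp

theorem ULvertex_eq_sub (t : Fin T) :
    ULvertex T Δt u l K t = (ULprofile T u l K (t + 1) - ULprofile T u l K t) / Δt := by
  unfold ULvertex ULprofile
  split_ifs with htK
  · rw [min_eq_left htK, min_eq_left htK.le, max_eq_right htK, max_eq_right htK.le]
    ring
  · rw [not_lt] at htK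
    rw [min_eq_right (by omega), min_eq_right htK, max_eq_left (by omega), max_eq_left htK,
      Nat.sub_sub]
    ring

theorem ULprofile_zero : ULprofile T u l K 0 = 0 := by
  simp [ULprofile, ZExt_zero]

theorem ULprofile_of_le {j : ℕ} (hj : j ≤ K) : ULprofile T u l K j = ZExt u j := by
  simp [ULprofile, min_eq_left hj, max_eq_right hj]

theorem ULprofile_of_ge {j : ℕ} (hj : K ≤ j) :
    ULprofile T u l K j = ZExt u K + ZExt l (T - K) - ZExt l (T - j) := by
  simp [ULprofile, min_eq_right hj, max_eq_left hj]

theorem ULprofile_sub_of_le {m : ℕ} (hm : m ≤ T) (hK : K ≤ T - m) :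
    ULprofile T u l K T - ULprofile T u l K (T - m) = ZExt l m := by
  rw [ULprofile_of_ge (hK.trans (Nat.sub_le T m)), ULprofile_of_ge hK, Nat.sub_self,
    Nat.sub_sub_self hm, ZExt_zero]
  ring

theorem sum_prefixSet_ULvertex (hΔt : Δt ≠ 0) {j : ℕ} (hj : j ≤ T) :
    Δt * ∑ t ∈ prefixSet T j, ULvertex T Δt u l K t = ULprofile T u l K j := by
  simp_rw [ULvertex_eq_sub]
  rw [sum_prefixSet (fun i => (ULprofile T u l K (i + 1) - ULprofile T u l K i) / Δt) hj,
    ← sum_div, sum_range_sub (ULprofile T u l K), ULprofile_zero, sub_zero]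
  field_simp

theorem sum_suffixSet_ULvertex (hΔt : Δt ≠ 0) (m : ℕ) :
    Δt * ∑ t ∈ suffixSet T m, ULvertex T Δt u l K t
      = ULprofile T u l K T - ULprofile T u l K (T - m) := by
  rw [← sum_prefixSet_ULvertex hΔt le_rfl, ← sum_prefixSet_ULvertex hΔt (Nat.sub_le T m),
    prefixSet_self, ← sum_compl_add_sum (prefixSet T (T - m)), suffixSet]
  ring

end Profile

section Validity

variable {T : ℕ} {Δt : ℝ} {u l : ℕ → ℝ} {K : ℕ}

theorem ValidUL.sub_le_sub (h : ValidUL T u l) {a b : ℕ} (hab : a ≤ b) (hb : b ≤ T) :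
    ZExt l (T - a) - ZExt l (T - b) ≤ ZExt u b - ZExt u a := by
  induction b, hab using Nat.le_induction with
  | base => simp
  | succ b hab ih =>
    have hstep := h.2.2.2.2.2.2 (b + 1) (by omega) hb
    rw [Nat.add_sub_cancel, show T - (b + 1) + 1 = T - b by omega] at hstep
    linarith [ih (by omega)]

theorem ULprofile_le (h : ValidUL T u l) {j : ℕ} (hj : j ≤ T) :
    ULprofile T u l K j ≤ ZExt u j := by
  rcases le_total j K with hjK | hKj
  · exact (ULprofile_of_le hjK).le
  · rw [ULprofile_of_ge hKj]
    linarith [h.sub_le_sub hKj hj]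

theorem le_ULprofile_sub (h : ValidUL T u l) (hK : K ≤ T) {m : ℕ} (hm : m ≤ T) :
    ZExt l m ≤ ULprofile T u l K T - ULprofile T u l K (T - m) := by
  rcases le_total K (T - m) with hKm | hmK
  · exact (ULprofile_sub_of_le hm hKm).ge
  · have := h.sub_le_sub hmK hK
    rw [ULprofile_of_ge hK, ULprofile_of_le hmK, Nat.sub_self, ZExt_zero]
    rw [Nat.sub_sub_self hm] at this
    linarith

theorem ULprofile_step_le (h : ValidUL T u l) {t : ℕ} (ht : t + 2 ≤ T) :
    ULprofile T u l K (t + 2) - ULprofile T u l K (t + 1)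
      ≤ ULprofile T u l K (t + 1) - ULprofile T u l K t := by
  obtain ⟨hu, -, -, hl, -, -, hul⟩ := h
  have hu' := hu (t + 1) (by omega) (by omega)
  rw [Nat.add_sub_cancel] at hu'
  rcases lt_trichotomy (t + 1) K with htK | rfl | htK
  · rw [ULprofile_of_le htK, ULprofile_of_le htK.le, ULprofile_of_le (by omega)]
    linarith
  · -- at the switch the last clause of `ValidUL` hands over from `u` to `l`
    have hul' := hul (t + 2) (by omega) ht
    rw [show T - (t + 2) + 1 = T - (t + 1) by omega, show t + 2 - 1 = t + 1 by omega] at hul'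
    rw [ULprofile_of_ge (by omega), ULprofile_of_le le_rfl, ULprofile_of_le (by omega)]
    linarith
  · have hl' := hl (T - (t + 1)) (by omega) (by omega)
    rw [show T - (t + 1) - 1 = T - (t + 2) by omega, show T - (t + 1) + 1 = T - t by omega] at hl'
    rw [ULprofile_of_ge (by omega), ULprofile_of_ge (by omega), ULprofile_of_ge (by omega)]
    linarith

theorem antitone_ULvertex (h : ValidUL T u l) (hΔt : 0 < Δt) :
    Antitone (ULvertex T Δt u l K) := by
  have hstep : ∀ a b, a ≤ b → b < T →
      ULprofile T u l K (b + 1) - ULprofile T u l K b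
        ≤ ULprofile T u l K (a + 1) - ULprofile T u l K a := by
    intro a b hab hb
    induction b, hab using Nat.le_induction with
    | base => exact le_rfl
    | succ b hab ih => exact (ULprofile_step_le h hb).trans (ih (by omega))
  intro i j hij
  rw [ULvertex_eq_sub, ULvertex_eq_sub]
  exact div_le_div_of_nonneg_right (hstep i j hij j.isLt) hΔt.le

end Validity

section Vertices

variable {T : ℕ} {Δt : ℝ} {u l : ℕ → ℝ} {K : ℕ}

theorem ULvertex_mem_ULset (h : ValidUL T u l) (hΔt : 0 < Δt) (hK : K ≤ T) :
    ULvertex T Δt u l K ∈ ULset T Δt u l := by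
  intro S hS
  have hv : Antitone (ULvertex T Δt u l K) := antitone_ULvertex h hΔt
  have hk : #S ≠ 0 := hS.card_pos.ne'
  have hkT : #S ≤ T := card_finset_fin_le S
  constructor
  · calc l #S = ZExt l #S := (ZExt_of_ne_zero l hk).symm
      _ ≤ ULprofile T u l K T - ULprofile T u l K (T - #S) := le_ULprofile_sub h hK hkT
      _ = Δt * ∑ t ∈ suffixSet T #S, ULvertex T Δt u l K t :=
          (sum_suffixSet_ULvertex hΔt.ne' _).symm
      _ ≤ Δt * ∑ t ∈ S, ULvertex T Δt u l K t := mul_le_mul_of_nonneg_left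
          (sum_le_sum_of_isUpperSet hv (isUpperSet_suffixSet _) (card_suffixSet hkT)) hΔt.le
  · calc Δt * ∑ t ∈ S, ULvertex T Δt u l K t
        ≤ Δt * ∑ t ∈ prefixSet T #S, ULvertex T Δt u l K t := mul_le_mul_of_nonneg_left
          (sum_le_sum_of_isLowerSet hv (isLowerSet_prefixSet _) (card_prefixSet hkT).symm) hΔt.le
      _ = ULprofile T u l K #S := sum_prefixSet_ULvertex hΔt.ne' hkT
      _ ≤ ZExt u #S := ULprofile_le h hkT
      _ = u #S := ZExt_of_ne_zero u hk

theorem sum_le_sum_ULvertex_of_isLowerSet (hΔt : 0 < Δt) {q : Fin T → ℝ}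
    (hq : q ∈ ULset T Δt u l) {I : Finset (Fin T)} (hI : IsLowerSet (I : Set (Fin T)))
    (hIne : I.Nonempty) (hIK : #I ≤ K) :
    ∑ t ∈ I, q t ≤ ∑ t ∈ I, ULvertex T Δt u l K t := by
  have hIT : #I ≤ T := card_finset_fin_le I
  refine le_of_mul_le_mul_left ?_ hΔt
  calc Δt * ∑ t ∈ I, q t ≤ u #I := (hq I hIne).2
    _ = ULprofile T u l K #I := by rw [ULprofile_of_le hIK, ZExt_of_ne_zero u hIne.card_pos.ne']
    _ = Δt * ∑ t ∈ I, ULvertex T Δt u l K t := by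
        rw [hI.eq_prefixSet, card_prefixSet hIT, sum_prefixSet_ULvertex hΔt.ne' hIT]

theorem sum_ULvertex_le_sum_of_isUpperSet (hΔt : 0 < Δt) {q : Fin T → ℝ}
    (hq : q ∈ ULset T Δt u l) {J : Finset (Fin T)} (hJ : IsUpperSet (J : Set (Fin T)))
    (hJne : J.Nonempty) (hJK : K ≤ T - #J) :
    ∑ t ∈ J, ULvertex T Δt u l K t ≤ ∑ t ∈ J, q t := by
  have hJT : #J ≤ T := card_finset_fin_le J
  refine le_of_mul_le_mul_left ?_ hΔt
  calc Δt * ∑ t ∈ J, ULvertex T Δt u l K t = ULprofile T u l K T - ULprofile T u l K (T - #J) := by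
        rw [hJ.eq_suffixSet, card_suffixSet hJT, sum_suffixSet_ULvertex hΔt.ne']
    _ = l #J := by rw [ULprofile_sub_of_le hJT hJK, ZExt_of_ne_zero l hJne.card_pos.ne']
    _ ≤ Δt * ∑ t ∈ J, q t := (hq J hJne).1

end Vertices

section Greedy

variable {T : ℕ} {Δt : ℝ} {u l : ℕ → ℝ}

theorem sum_mul_le_sum_mul_ULvertex (hΔt : 0 < Δt) {q : Fin T → ℝ} (hq : q ∈ ULset T Δt u l)
    {c : Fin T → ℝ} (hc : Antitone c) :
    ∑ t, c t * q t ≤ ∑ t, c t * ULvertex T Δt u l #{t | 0 < c t} t := by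
  set K := #{t | 0 < c t}
  set v := ULvertex T Δt u l K
  have hcard : K + #{t | ¬ 0 < c t} = T := by
    rw [card_filter_add_card_filter_not, card_univ, Fintype.card_fin]
  have hpos : 0 ≤ ∑ t with 0 < c t, c t * (v t - q t) := by
    refine sum_mul_nonneg_of_sum_superlevel_nonneg _ (fun t ht => (mem_filter.1 ht).2.le)
      fun t ht => ?_
    rw [sum_sub_distrib, sub_nonneg]
    refine sum_le_sum_ULvertex_of_isLowerSet hΔt hq (fun x y hyx hx => ?_)
      ⟨t, by simpa using ht⟩ (card_le_card (filter_subset _ _))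
    simp only [coe_filter, mem_filter, mem_univ, true_and, Set.mem_ofPred_eq] at hx ⊢
    exact ⟨hx.1.trans_le (hc hyx), hx.2.trans (hc hyx)⟩
  have hneg : 0 ≤ ∑ t with ¬ 0 < c t, -c t * (q t - v t) := by
    refine sum_mul_nonneg_of_sum_superlevel_nonneg _
      (fun t ht => neg_nonneg.2 (not_lt.1 (mem_filter.1 ht).2)) fun t ht => ?_
    rw [sum_sub_distrib, sub_nonneg]
    refine sum_ULvertex_le_sum_of_isUpperSet hΔt hq (fun x y hxy hx => ?_)
      ⟨t, by simpa using ht⟩ ?_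
    · simp only [coe_filter, mem_filter, mem_univ, true_and, Set.mem_ofPred_eq, not_lt,
        neg_le_neg_iff] at hx ⊢
      exact ⟨(hc hxy).trans hx.1, (hc hxy).trans hx.2⟩
    · have := card_le_card (filter_subset (fun x => -c t ≤ -c x) (univ.filter (¬ 0 < c ·)))
      omega
  have hneg' : ∑ t with ¬ 0 < c t, -c t * (q t - v t) = ∑ t with ¬ 0 < c t, c t * (v t - q t) :=
    sum_congr rfl fun t _ => by ring
  rw [← sub_nonneg, ← sum_sub_distrib]
  simp_rw [← mul_sub]
  rw [← sum_filter_add_sum_filter_not univ (fun t => 0 < c t)]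
  linarith

end Greedy

def ULvertices (T : ℕ) (Δt : ℝ) (u l : ℕ → ℝ) : Set (Fin T → ℝ) :=
  Set.range fun x : Equiv.Perm (Fin T) × Fin (T + 1) => ULvertex T Δt u l x.2 ∘ x.1

section ConvexHull

variable {T : ℕ} {Δt : ℝ} {u l : ℕ → ℝ}

theorem ULvertices_subset_ULset (h : ValidUL T u l) (hΔt : 0 < Δt) :
    ULvertices T Δt u l ⊆ ULset T Δt u l := by
  rintro _ ⟨⟨σ, K⟩, rfl⟩
  exact comp_perm_mem_ULset (ULvertex_mem_ULset h hΔt (Nat.lt_succ_iff.1 K.isLt)) σ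

theorem ULset_subset_convexHull_ULvertices (hΔt : 0 < Δt) :
    ULset T Δt u l ⊆ convexHull ℝ (ULvertices T Δt u l) := by
  intro p hp
  by_contra hp'
  obtain ⟨f, s, hfs, hsp⟩ := geometric_hahn_banach_closed_point (convex_convexHull ℝ _)
    ((Set.finite_range _).isCompact_convexHull (𝕜 := ℝ)).isClosed hp'
  set c : Fin T → ℝ := fun i => f fun j => if i = j then 1 else 0
  have hf : ∀ x, f x = ∑ t, c t * x t := fun x => by
    simp_rw [mul_comm (c _)]
    exact f.toLinearMap.pi_apply_eq_sum_univ x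
  set σ : Equiv.Perm (Fin T) := Fin.revPerm.trans (Tuple.sort c)
  have hσ : Antitone (c ∘ σ) := (Tuple.monotone_sort c).comp_antitone Fin.rev_anti
  set K := #{t | 0 < (c ∘ σ) t}
  have hK : K < T + 1 := Nat.lt_succ_of_le (card_finset_fin_le _)
  have hvert := hfs _ (subset_convexHull ℝ _ ⟨(σ.symm, ⟨K, hK⟩), rfl⟩)
  have hgreedy : ∑ t, c (σ t) * p (σ t) ≤ ∑ t, c (σ t) * ULvertex T Δt u l K t :=
    sum_mul_le_sum_mul_ULvertex hΔt (comp_perm_mem_ULset hp σ) hσ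
  rw [hf, ← Equiv.sum_comp σ] at hvert hsp
  simp only [Function.comp_apply, Equiv.symm_apply_apply] at hvert
  linarith

theorem ULvertex_add (u₁ l₁ u₂ l₂ : ℕ → ℝ) (K : ℕ) :
    ULvertex T Δt (u₁ + u₂) (l₁ + l₂) K = ULvertex T Δt u₁ l₁ K + ULvertex T Δt u₂ l₂ K := by
  ext t
  simp only [ULvertex, ZExt_add, Pi.add_apply]
  split_ifs <;> ring

theorem ULvertices_add_subset (u₁ l₁ u₂ l₂ : ℕ → ℝ) :
    ULvertices T Δt (u₁ + u₂) (l₁ + l₂) ⊆ ULvertices T Δt u₁ l₁ + ULvertices T Δt u₂ l₂ := by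
  rintro _ ⟨x, rfl⟩
  exact ⟨_, ⟨x, rfl⟩, _, ⟨x, rfl⟩, by simp only [ULvertex_add]; rfl⟩

theorem ULset_subset_add (hΔt : 0 < Δt) {u₁ l₁ u₂ l₂ : ℕ → ℝ} (h₁ : ValidUL T u₁ l₁)
    (h₂ : ValidUL T u₂ l₂) :
    ULset T Δt (u₁ + u₂) (l₁ + l₂) ⊆ ULset T Δt u₁ l₁ + ULset T Δt u₂ l₂ :=
  calc ULset T Δt (u₁ + u₂) (l₁ + l₂)
      ⊆ convexHull ℝ (ULvertices T Δt (u₁ + u₂) (l₁ + l₂)) :=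
        ULset_subset_convexHull_ULvertices hΔt
    _ ⊆ convexHull ℝ (ULvertices T Δt u₁ l₁ + ULvertices T Δt u₂ l₂) :=
        convexHull_mono (ULvertices_add_subset u₁ l₁ u₂ l₂)
    _ = convexHull ℝ (ULvertices T Δt u₁ l₁) + convexHull ℝ (ULvertices T Δt u₂ l₂) :=
        convexHull_add _ _
    _ ⊆ ULset T Δt u₁ l₁ + ULset T Δt u₂ l₂ := Set.add_subset_add
        (convexHull_min (ULvertices_subset_ULset h₁ hΔt) convex_ULset)
        (convexHull_min (ULvertices_subset_ULset h₂ hΔt) convex_ULset)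

end ConvexHull

theorem ULset_minkowski_sum_general (T : ℕ) (Δt : ℝ) (hΔt : 0 < Δt)
    (u₁ l₁ u₂ l₂ : ℕ → ℝ)
    (h₁ : ValidUL T u₁ l₁) (h₂ : ValidUL T u₂ l₂) :
    {p : Fin T → ℝ | ∃ p₁ ∈ ULset T Δt u₁ l₁, ∃ p₂ ∈ ULset T Δt u₂ l₂, p = p₁ + p₂}
      = ULset T Δt (fun k => u₁ k + u₂ k) (fun k => l₁ k + l₂ k) := by
  have hminkowski : {p : Fin T → ℝ | ∃ p₁ ∈ ULset T Δt u₁ l₁, ∃ p₂ ∈ ULset T Δt u₂ l₂, p = p₁ + p₂}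
      = ULset T Δt u₁ l₁ + ULset T Δt u₂ l₂ := by
    ext p
    simp only [Set.mem_ofPred_eq, Set.mem_add, eq_comm]
  rw [hminkowski]
  exact (ULset_add_subset u₁ l₁ u₂ l₂).antisymm (ULset_subset_add hΔt h₁ h₂)

/-- For valid UL-parameter pairs, the Minkowski sum of the
UL-flexibility sets equals the UL-flexibility set of the summed parameters. -/
theorem ULset_minkowski_sum (T : ℕ) (hT : 1 ≤ T) (Δt : ℝ) (hΔt : 0 < Δt)
    (u₁ l₁ u₂ l₂ : ℕ → ℝ)
    (h₁ : ValidUL T u₁ l₁) (h₂ : ValidUL T u₂ l₂) :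
    {p : Fin T → ℝ | ∃ p₁ ∈ ULset T Δt u₁ l₁, ∃ p₂ ∈ ULset T Δt u₂ l₂, p = p₁ + p₂}
      = ULset T Δt (fun k => u₁ k + u₂ k) (fun k => l₁ k + l₂ k) :=
  ULset_minkowski_sum_general T Δt hΔt u₁ l₁ u₂ l₂ h₁ h₂
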